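/- For any 0 ≤ Q ≤ 1, the function f(x) = 1 + φ(√(Q + (1-Q)(1-x²))) - φ(√(1-x²)) is concave in x on [0,1]. -/

import Mathlib

noncomputable def phi (x : ℝ) : ℝ :=
  1 - (1/2) * (1 + x) * Real.logb 2 (1 + x) - (1/2) * (1 - x) * Real.logb 2 (1 - x)

/-!
Put `r = √(1 - c x²)`. From `φ'(y) = -artanh y / log 2` one gets
`d²/dx² φ(√(1 - c x²)) = C(r) / (x² log 2)` with `C(t) = (1 - t²)(artanh t - t) / t³`
(`artanhRatio`), because `1 - r² = c x²` absorbs the parameter `c`. So for `c ≤ d` the second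
derivative of `φ(√(1 - c x²)) - φ(√(1 - d x²))` is `(C(r) - C(s)) / (x² log 2)` with `s ≤ r`,
and it suffices that `C` decreases on `(0, 1]`. Its derivative is
`(t³ - (3 - t²)(artanh t - t)) / t⁴`, and `t³ ≤ (3 - t²)(artanh t - t)` holds because its
derivative reduces to `artanh t ≤ t / (1 - t²)`.
-/

open Real Set

lemma monotoneOn_of_hasDerivAt_nonneg {D : Set ℝ} (hD : Convex ℝ D) {f f' : ℝ → ℝ}
    (hf : ∀ x ∈ D, HasDerivAt f (f' x) x) (hf' : ∀ x ∈ interior D, 0 ≤ f' x) :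
    MonotoneOn f D :=
  monotoneOn_of_hasDerivWithinAt_nonneg hD (fun x hx ↦ (hf x hx).continuousAt.continuousWithinAt)
    (fun x hx ↦ (hf x (interior_subset hx)).hasDerivWithinAt) hf'

lemma antitoneOn_of_hasDerivAt_nonpos {D : Set ℝ} (hD : Convex ℝ D) {f f' : ℝ → ℝ}
    (hf : ∀ x ∈ D, HasDerivAt f (f' x) x) (hf' : ∀ x ∈ interior D, f' x ≤ 0) :
    AntitoneOn f D :=
  antitoneOn_of_hasDerivWithinAt_nonpos hD (fun x hx ↦ (hf x hx).continuousAt.continuousWithinAt)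
    (fun x hx ↦ (hf x (interior_subset hx)).hasDerivWithinAt) hf'

namespace Real

lemma artanh_eq_log_sub_log_div_two {t : ℝ} (ht : t ∈ Ioo (-1) 1) :
    artanh t = (log (1 + t) - log (1 - t)) / 2 := by
  rw [artanh_eq_half_log (Ioo_subset_Icc_self ht),
    log_div (by linarith [ht.1]) (by linarith [ht.2])]
  ring

lemma hasDerivAt_artanh {t : ℝ} (ht : t ∈ Ioo (-1) 1) : HasDerivAt artanh (1 - t ^ 2)⁻¹ t := by
  have hp : 1 + t ≠ 0 := by linarith [ht.1]
  have hm : 1 - t ≠ 0 := by linarith [ht.2]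
  have hlog : HasDerivAt (fun y ↦ (log (1 + y) - log (1 - y)) / 2)
      ((1 / (1 + t) - -1 / (1 - t)) / 2) t :=
    ((((hasDerivAt_id t).const_add 1).log hp).sub
      (((hasDerivAt_id t).const_sub 1).log hm)).div_const 2 |>.congr_deriv (by simp)
  refine (hlog.congr_of_eventuallyEq ?_).congr_deriv ?_
  · filter_upwards [isOpen_Ioo.mem_nhds ht] with y hy using artanh_eq_log_sub_log_div_two hy
  · have : 1 - t ^ 2 ≠ 0 := by nlinarith [ht.1, ht.2]
    field_simp
    ring

lemma artanh_le_div_one_sub_sq {t : ℝ} (ht : t ∈ Ico 0 1) : artanh t ≤ t / (1 - t ^ 2) := by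
  have hmono : MonotoneOn (fun t ↦ t / (1 - t ^ 2) - artanh t) (Ico 0 1) := by
    refine monotoneOn_of_hasDerivAt_nonneg (f' := fun t ↦ 2 * t ^ 2 / (1 - t ^ 2) ^ 2)
      (convex_Ico 0 1) (fun x hx ↦ ?_) (fun x _ ↦ by positivity)
    have h2 : 1 - x ^ 2 ≠ 0 := by nlinarith [hx.1, hx.2]
    have hq : HasDerivAt (fun t ↦ t / (1 - t ^ 2))
        ((1 * (1 - x ^ 2) - x * -(2 * x)) / (1 - x ^ 2) ^ 2) x :=
      (hasDerivAt_id x).div (by simpa using (hasDerivAt_pow 2 x).const_sub 1) h2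
    refine (hq.sub (hasDerivAt_artanh ⟨by linarith [hx.1], hx.2⟩)).congr_deriv ?_
    field_simp
    ring
  simpa [artanh_zero] using hmono ⟨le_rfl, one_pos⟩ ht ht.1

lemma pow_three_le_mul_artanh_sub {t : ℝ} (ht : t ∈ Ico 0 1) :
    t ^ 3 ≤ (3 - t ^ 2) * (artanh t - t) := by
  have hmono : MonotoneOn (fun t ↦ (3 - t ^ 2) * (artanh t - t) - t ^ 3) (Ico 0 1) := by
    refine monotoneOn_of_hasDerivAt_nonneg (f' := fun t ↦ 2 * t * (t / (1 - t ^ 2) - artanh t))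
      (convex_Ico 0 1) (fun x hx ↦ ?_) (fun x hx ↦ ?_)
    · have h2 : 1 - x ^ 2 ≠ 0 := by nlinarith [hx.1, hx.2]
      have hq : HasDerivAt (fun t ↦ 3 - t ^ 2) (-(2 * x)) x := by
        simpa using (hasDerivAt_pow 2 x).const_sub 3
      have hc : HasDerivAt (fun t ↦ t ^ 3) (3 * x ^ 2) x := by simpa using hasDerivAt_pow 3 x
      refine ((hq.mul ((hasDerivAt_artanh ⟨by linarith [hx.1], hx.2⟩).sub
        (hasDerivAt_id' x))).sub hc).congr_deriv ?_
      simp only [Pi.sub_apply]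
      field_simp
      ring
    · rw [interior_Ico] at hx
      have := artanh_le_div_one_sub_sq (Ioo_subset_Ico_self hx)
      have : 0 ≤ x / (1 - x ^ 2) - artanh x := by linarith
      have : 0 ≤ 2 * x := by linarith [hx.1]
      positivity
  simpa [artanh_zero] using hmono ⟨le_rfl, one_pos⟩ ht ht.1

end Real

noncomputable def artanhRatio (t : ℝ) : ℝ := (1 - t ^ 2) * (artanh t - t) / t ^ 3

lemma artanhRatio_one : artanhRatio 1 = 0 := by simp [artanhRatio]

lemma artanhRatio_nonneg {t : ℝ} (ht : t ∈ Ioo 0 1) : 0 ≤ artanhRatio t := by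
  have h3 := pow_three_le_mul_artanh_sub (Ioo_subset_Ico_self ht)
  have : 0 ≤ artanh t - t :=
    nonneg_of_mul_nonneg_right (h3.trans' (pow_pos ht.1 3).le) (by nlinarith [ht.1, ht.2])
  have : 0 ≤ 1 - t ^ 2 := by nlinarith [ht.1, ht.2]
  have := ht.1
  unfold artanhRatio
  positivity

lemma antitoneOn_artanhRatio : AntitoneOn artanhRatio (Ioc 0 1) := by
  have hIoo : AntitoneOn artanhRatio (Ioo 0 1) := by
    refine antitoneOn_of_hasDerivAt_nonpos
      (f' := fun t ↦ (t ^ 3 - (3 - t ^ 2) * (artanh t - t)) / t ^ 4)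
      (convex_Ioo 0 1) (fun x hx ↦ ?_) (fun x hx ↦ ?_)
    · have hx0 : x ≠ 0 := hx.1.ne'
      have h2 : 1 - x ^ 2 ≠ 0 := by nlinarith [hx.1, hx.2]
      have hq : HasDerivAt (fun t ↦ 1 - t ^ 2) (-(2 * x)) x := by
        simpa using (hasDerivAt_pow 2 x).const_sub 1
      have hc : HasDerivAt (fun t ↦ t ^ 3) (3 * x ^ 2) x := by simpa using hasDerivAt_pow 3 x
      refine ((hq.mul ((hasDerivAt_artanh ⟨by linarith [hx.1], hx.2⟩).sub
        (hasDerivAt_id' x))).div hc (by positivity)).congr_deriv ?_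
      simp only [Pi.mul_apply, Pi.sub_apply]
      field_simp
      ring
    · rw [interior_Ioo] at hx
      have := pow_three_le_mul_artanh_sub (Ioo_subset_Ico_self hx)
      exact div_nonpos_of_nonpos_of_nonneg (by linarith) (by positivity)
  intro a ha b hb hab
  rcases hb.2.lt_or_eq with hb1 | rfl
  · exact hIoo ⟨ha.1, hab.trans_lt hb1⟩ ⟨ha.1.trans_le hab, hb1⟩ hab
  rcases ha.2.lt_or_eq with ha1 | rfl
  · exact artanhRatio_one ▸ artanhRatio_nonneg ⟨ha.1, ha1⟩
  · exact le_rfl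

lemma phi_eq_log (y : ℝ) :
    phi y = 1 - ((1 + y) * log (1 + y) + (1 - y) * log (1 - y)) / (2 * log 2) := by
  have : log 2 ≠ 0 := (log_pos one_lt_two).ne'
  unfold phi logb
  field_simp
  ring

@[fun_prop]
lemma continuous_phi : Continuous phi := by
  have h₁ := continuous_mul_log.comp (continuous_const_add (1 : ℝ))
  have h₂ := continuous_mul_log.comp (continuous_sub_left (1 : ℝ))
  simp only [Function.comp_def] at h₁ h₂
  simp only [funext phi_eq_log]
  fun_prop

lemma hasDerivAt_phi {y : ℝ} (hy : y ∈ Ioo (-1) 1) : HasDerivAt phi (-artanh y / log 2) y := by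
  have hp : 1 + y ≠ 0 := by linarith [hy.1]
  have hm : 1 - y ≠ 0 := by linarith [hy.2]
  have h₁ : HasDerivAt (fun y ↦ 1 + y) 1 y := (hasDerivAt_id' y).const_add 1
  have h₂ : HasDerivAt (fun y ↦ 1 - y) (-1) y := by simpa using (hasDerivAt_id' y).const_sub 1
  have h := (((h₁.mul (h₁.log hp)).add (h₂.mul (h₂.log hm))).div_const (2 * log 2)).const_sub 1
  rw [funext phi_eq_log]
  refine h.congr_deriv ?_
  have : log 2 ≠ 0 := (log_pos one_lt_two).ne'
  rw [artanh_eq_log_sub_log_div_two hy]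
  field_simp
  ring

section SqrtOneSub

variable {c x : ℝ}

lemma hasDerivAt_sqrt_one_sub_mul_sq (h : 0 < 1 - c * x ^ 2) :
    HasDerivAt (fun x ↦ √(1 - c * x ^ 2)) (-(c * x) / √(1 - c * x ^ 2)) x := by
  have hu : HasDerivAt (fun x ↦ 1 - c * x ^ 2) (-(c * (2 * x))) x := by
    simpa using ((hasDerivAt_pow 2 x).const_mul c).const_sub 1
  refine ((hasDerivAt_sqrt h.ne').comp x hu).congr_deriv ?_
  field_simp

lemma sqrt_one_sub_mul_sq_mem_Ioo (hc : c ∈ Ioc 0 1) (hx : x ∈ Ioo 0 1) :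
    √(1 - c * x ^ 2) ∈ Ioo 0 1 := by
  have : 0 < c * x ^ 2 := mul_pos hc.1 (pow_pos hx.1 2)
  have : c * x ^ 2 < 1 := by nlinarith [hc.2, hx.1, hx.2]
  exact ⟨sqrt_pos.2 (by linarith), (sqrt_lt' one_pos).2 (by linarith)⟩

lemma hasDerivAt_phi_sqrt_one_sub_mul_sq (hc : c ∈ Icc 0 1) (hx : x ∈ Ioo 0 1) :
    HasDerivAt (fun x ↦ phi √(1 - c * x ^ 2))
      (c * x * artanh √(1 - c * x ^ 2) / √(1 - c * x ^ 2) / log 2) x := by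
  rcases hc.1.eq_or_lt with rfl | hc0
  · simpa using hasDerivAt_const x (phi 1)
  have hr := sqrt_one_sub_mul_sq_mem_Ioo ⟨hc0, hc.2⟩ hx
  have hu : 0 < 1 - c * x ^ 2 := sqrt_pos.1 hr.1
  refine ((hasDerivAt_phi ⟨by linarith [hr.1], hr.2⟩).comp x
    (hasDerivAt_sqrt_one_sub_mul_sq hu)).congr_deriv ?_
  field_simp

lemma hasDerivAt_mul_artanh_sqrt_one_sub_mul_sq (hc : c ∈ Icc 0 1) (hx : x ∈ Ioo 0 1) :
    HasDerivAt (fun x ↦ c * x * artanh √(1 - c * x ^ 2) / √(1 - c * x ^ 2) / log 2)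
      (artanhRatio √(1 - c * x ^ 2) / x ^ 2 / log 2) x := by
  rcases hc.1.eq_or_lt with rfl | hc0
  · simpa [artanhRatio_one] using hasDerivAt_const x (0 : ℝ)
  have hr := sqrt_one_sub_mul_sq_mem_Ioo ⟨hc0, hc.2⟩ hx
  have hu : 0 < 1 - c * x ^ 2 := sqrt_pos.1 hr.1
  have hsq := hasDerivAt_sqrt_one_sub_mul_sq hu
  have ha := (hasDerivAt_artanh ⟨by linarith [hr.1], hr.2⟩).comp x hsq
  have h := ((((hasDerivAt_id' x).const_mul c).mul ha).div hsq hr.1.ne').div_const (log 2)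
  refine h.congr_deriv ?_
  have hr2 : √(1 - c * x ^ 2) ^ 2 = 1 - c * x ^ 2 := sq_sqrt hu.le
  have hx0 : x ≠ 0 := hx.1.ne'
  simp only [Pi.mul_apply, Function.comp_apply, artanhRatio]
  generalize √(1 - c * x ^ 2) = r at hr hr2 ⊢
  obtain rfl : c = (1 - r ^ 2) / x ^ 2 := by field_simp; linarith
  have hr0 : r ≠ 0 := hr.1.ne'
  field_simp
  ring

end SqrtOneSub

theorem concaveOn_phi_sqrt_one_sub_mul_sq_sub {c d : ℝ} (hc : 0 ≤ c) (hcd : c ≤ d) (hd : d ≤ 1) :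
    ConcaveOn ℝ (Icc 0 1) (fun x ↦ phi √(1 - c * x ^ 2) - phi √(1 - d * x ^ 2)) := by
  have hc' : c ∈ Icc 0 1 := ⟨hc, hcd.trans hd⟩
  have hd' : d ∈ Icc 0 1 := ⟨hc.trans hcd, hd⟩
  have hI : interior (Icc (0 : ℝ) 1) = Ioo 0 1 := interior_Icc
  refine concaveOn_of_hasDerivWithinAt2_nonpos (convex_Icc 0 1) (by fun_prop)
    (fun x hx ↦ ((hasDerivAt_phi_sqrt_one_sub_mul_sq hc' (hI ▸ hx)).sub
      (hasDerivAt_phi_sqrt_one_sub_mul_sq hd' (hI ▸ hx))).hasDerivWithinAt)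
    (fun x hx ↦ ((hasDerivAt_mul_artanh_sqrt_one_sub_mul_sq hc' (hI ▸ hx)).sub
      (hasDerivAt_mul_artanh_sqrt_one_sub_mul_sq hd' (hI ▸ hx))).hasDerivWithinAt)
    (fun x hx ↦ ?_)
  rw [hI] at hx
  have hs : 0 < √(1 - d * x ^ 2) := sqrt_pos.2 (by nlinarith [hx.1, hx.2])
  have hsr : √(1 - d * x ^ 2) ≤ √(1 - c * x ^ 2) := by gcongr
  have hr : √(1 - c * x ^ 2) ≤ 1 := sqrt_le_one.2 (by nlinarith)
  have := antitoneOn_artanhRatio ⟨hs, hsr.trans hr⟩ ⟨hs.trans_le hsr, hr⟩ hsr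
  rw [sub_nonpos]
  gcongr

theorem stmt_4 (Q : ℝ) (hQ0 : 0 ≤ Q) (hQ1 : Q ≤ 1) :
    ConcaveOn ℝ (Set.Icc 0 1)
      (fun x : ℝ => 1 + phi (Real.sqrt (Q + (1 - Q) * (1 - x^2))) - phi (Real.sqrt (1 - x^2))) := by
  have h := concaveOn_phi_sqrt_one_sub_mul_sq_sub (c := 1 - Q) (by linarith) (by linarith) le_rfl
  refine (h.add_const 1).congr fun x _ ↦ ?_
  simp only [Pi.add_apply, one_mul, show Q + (1 - Q) * (1 - x ^ 2) = 1 - (1 - Q) * x ^ 2 by ring]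
  ring
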